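/- arXiv:1601.02419 — 2 statements merged into one kernel-verified Lean document; each statement's English description precedes it below -/
import Mathlib

section
/- In the setting of the previous statement, define for ε ∈ ℝ the one-parameter family Q_ε := e^{−mεΥ}(Q + εPΥ), μ_ε := e^{mεΥ}μ, and Q′_ε implicitly by ∫ Q′_ε dμ_ε = ∫ Q′ dμ + 2ε∫ Υ Q dμ + 2∫ Υ Q_ε dμ_ε. Then the derivative at ε = 0 satisfies (d/dε)|_{ε=0} ∫_M Q′_ε dμ_ε = 4 ∫_M Υ Q dμ. -/
/-! The conformal factors `e^{-mεΥ}` of `Q_ε` and `e^{mεΥ}` of `μ_ε` cancel pointwise, so the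
transformation law is the quadratic polynomial `∫ Q′ + 4ε∫ΥQ + 2ε²∫ΥPΥ` in `ε`, whose derivative
at `0` is its linear coefficient. -/

open MeasureTheory

theorem hasDerivAt_quadratic_zero (a b c : ℝ) :
    HasDerivAt (fun ε : ℝ => a + b * ε + c * ε ^ 2) b 0 := by
  have h : HasDerivAt (fun ε : ℝ => a + b * ε + c * ε ^ 2) (b * 1 + c * (2 * 0 ^ 1)) 0 :=
    (((hasDerivAt_id 0).const_mul b).const_add a).add ((hasDerivAt_pow 2 0).const_mul c)
  simpa using h

theorem integral_mul_exp_neg_mul_mul_exp {M : Type*} [MeasurableSpace M] (μ : Measure M)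
    {Υ Q R : M → ℝ} (hΥQ : Integrable (fun p => Υ p * Q p) μ)
    (hΥR : Integrable (fun p => Υ p * R p) μ) (m ε : ℝ) :
    ∫ p, (ε * Υ p) * (Real.exp (-(m * ε) * Υ p) * (Q p + ε * R p))
        * Real.exp ((m * ε) * Υ p) ∂μ
      = ε * (∫ p, Υ p * Q p ∂μ) + ε ^ 2 * ∫ p, Υ p * R p ∂μ := by
  have hpt : ∀ p, (ε * Υ p) * (Real.exp (-(m * ε) * Υ p) * (Q p + ε * R p))
      * Real.exp ((m * ε) * Υ p) = ε * (Υ p * Q p) + ε ^ 2 * (Υ p * R p) := by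
    intro p
    rw [neg_mul, Real.exp_neg]
    field_simp
  simp only [hpt]
  rw [integral_add (hΥQ.const_mul ε) (hΥR.const_mul (ε ^ 2)), integral_const_mul,
    integral_const_mul]

theorem stmt4_general {M : Type*} [MeasurableSpace M] (μ : Measure M) (m : ℝ)
    (P : (M → ℝ) → (M → ℝ)) (Υ Q Q' : M → ℝ)
    (hiΥQ : Integrable (fun p => Υ p * Q p) μ)
    (hiΥPΥ : Integrable (fun p => Υ p * P Υ p) μ) :
    HasDerivAt
      (fun ε : ℝ =>
        (∫ p, Q' p ∂μ) + 2 * ε * (∫ p, Υ p * Q p ∂μ)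
          + 2 * ∫ p, (ε * Υ p)
              * (Real.exp (-(m * ε) * Υ p) * (Q p + ε * P Υ p))
              * Real.exp ((m * ε) * Υ p) ∂μ)
      (4 * ∫ p, Υ p * Q p ∂μ) 0 := by
  simp only [integral_mul_exp_neg_mul_mul_exp μ hiΥQ hiΥPΥ m]
  convert hasDerivAt_quadratic_zero (∫ p, Q' p ∂μ) (4 * ∫ p, Υ p * Q p ∂μ)
    (2 * ∫ p, Υ p * P Υ p ∂μ) using 1
  ext ε
  ring

/-- The total Q-prime curvature is a conformal primitive of the Q-curvature:
with `Q_ε := e^{−mεΥ}(Q + εPΥ)`, `μ_ε := e^{mεΥ}μ` and `∫ Q′_ε dμ_ε` given by the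
transformation law
`∫ Q′_ε dμ_ε = ∫ Q′ dμ + 2ε∫ΥQ dμ + 2∫ (εΥ) Q_ε dμ_ε`,
one has `(d/dε)|₀ ∫ Q′_ε dμ_ε = 4∫ ΥQ dμ`. -/
theorem stmt4 {M : Type*} [MeasurableSpace M] (μ : Measure M) (m : ℝ)
    (P : (M → ℝ) → (M → ℝ)) (Υ Q Q' : M → ℝ)
    (hΥb : ∃ C : ℝ, ∀ p, |Υ p| ≤ C)
    (hiΥQ : Integrable (fun p => Υ p * Q p) μ)
    (hiΥPΥ : Integrable (fun p => Υ p * P Υ p) μ) :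
    HasDerivAt
      (fun ε : ℝ =>
        (∫ p, Q' p ∂μ) + 2 * ε * (∫ p, Υ p * Q p ∂μ)
          + 2 * ∫ p, (ε * Υ p)
              * (Real.exp (-(m * ε) * Υ p) * (Q p + ε * P Υ p))
              * Real.exp ((m * ε) * Υ p) ∂μ)
      (4 * ∫ p, Υ p * Q p ∂μ) 0 :=
  stmt4_general μ m P Υ Q Q' hiΥQ hiΥPΥ
end

section
/- Let A be a commutative ring, let R = A[[t]] be a graded module of formal series Σ_{j≥0} f_j t^{j/2} in half-integer powers of t with coefficients f_j ∈ A, and let m ≥ 1 be an integer. Let L : R → R be an A-linear map satisfying the indicial property: for every f ∈ A and every integer j ≥ 0, L(f·t^{j/2}) ≡ −(1/4)·j·(j − 2m)·f·t^{j/2} modulo t^{(j+1)/2}·R. Then for every f₀ ∈ A ⊗ ℚ there exist f₁, …, f_{2m−1} ∈ A ⊗ ℚ such that L(Σ_{j=0}^{2m−1} f_j t^{j/2}) ∈ t^m·R ⊗ ℚ. Moreover the f_j for 1 ≤ j ≤ 2m−1 are uniquely determined by f₀. -/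
/-!
The indicial property makes `L` triangular with diagonal `d j = -(1/4) j (j - 2m)`: adding
`c t^{n/2}` to `g` leaves the coefficients of `L g` below `t^{n/2}` unchanged and adds `d n • c`
to the coefficient of `t^{n/2}`. Since `d 0 = 0` and `d n ≠ 0` for `0 < n < 2m`, the
coefficients `f₁, …, f_{2m-1}` are forced, and can be solved for, one at a time.
-/

section

variable {K M F : Type*} [Field K] [AddCommGroup M] [Module K M] [FunLike F (ℕ → M) (ℕ → M)]

/-- `L (x t^{j/2}) = d j • x t^{j/2} + O(t^{(j+1)/2})`. -/
def HasIndicialCoeffs (L : F) (d : ℕ → K) : Prop :=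
  ∀ (x : M) (j i : ℕ), i ≤ j → L (Pi.single j x) i = if i = j then d j • x else 0

/-- `g` is a polynomial in `t^{1/2}` of degree `< n` with constant term `x₀`, and
`L g = O(t^{n/2})`. -/
def IsFormalSolution (L : F) (x₀ : M) (n : ℕ) (g : ℕ → M) : Prop :=
  g 0 = x₀ ∧ (∀ j, n ≤ j → g j = 0) ∧ ∀ i, i < n → L g i = 0

variable {L : F} {d : ℕ → K}

namespace HasIndicialCoeffs

theorem apply_single_of_lt (hL : HasIndicialCoeffs L d) (x : M) {i j : ℕ} (h : i < j) :
    L (Pi.single j x) i = 0 := by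
  rw [hL x j i h.le, if_neg h.ne]

theorem apply_single_self (hL : HasIndicialCoeffs L d) (x : M) (j : ℕ) :
    L (Pi.single j x) j = d j • x := by
  rw [hL x j j le_rfl, if_pos rfl]

end HasIndicialCoeffs

theorem isFormalSolution_one_iff (hL : HasIndicialCoeffs L d) (hd₀ : d 0 = 0) (x₀ : M)
    (g : ℕ → M) : IsFormalSolution L x₀ 1 g ↔ g = Pi.single 0 x₀ := by
  constructor
  · rintro ⟨h0, hsupp, -⟩
    funext j
    rcases j with _ | j
    · simp [h0]
    · simp [hsupp (j + 1) (by omega)]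
  · rintro rfl
    refine ⟨by simp, fun j hj => Pi.single_eq_of_ne (show j ≠ 0 by omega) _, fun i hi => ?_⟩
    obtain rfl : i = 0 := by omega
    rw [hL.apply_single_self, hd₀, zero_smul]

variable [AddMonoidHomClass F (ℕ → M) (ℕ → M)]

theorem IsFormalSolution.update_self_zero {x₀ : M} {n : ℕ} {g : ℕ → M}
    (hL : HasIndicialCoeffs L d) (hn : 0 < n) (hg : IsFormalSolution L x₀ (n + 1) g) :
    IsFormalSolution L x₀ n (Function.update g n 0) := by
  obtain ⟨h0, hsupp, hLg⟩ := hg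
  refine ⟨by rw [Function.update_of_ne hn.ne, h0], fun j hj => ?_, fun i hi => ?_⟩
  · rcases hj.eq_or_lt with rfl | hj
    · exact Function.update_self ..
    · rw [Function.update_of_ne hj.ne', hsupp j hj]
  · rw [Pi.update_eq_sub_add_single, Pi.single_zero, add_zero, map_sub, Pi.sub_apply,
      hLg i (by omega), hL.apply_single_of_lt _ hi, sub_zero]

theorem IsFormalSolution.add_single_iff {x₀ : M} {n : ℕ} {g : ℕ → M}
    (hL : HasIndicialCoeffs L d) (hn : 0 < n) (hg : IsFormalSolution L x₀ n g) (c : M) :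
    IsFormalSolution L x₀ (n + 1) (g + Pi.single n c) ↔ L g n + d n • c = 0 := by
  obtain ⟨h0, hsupp, hLg⟩ := hg
  have hLgc : ∀ i, i ≤ n → L (g + Pi.single n c) i = L g i + if i = n then d n • c else 0 :=
    fun i hi => by rw [map_add, Pi.add_apply, hL c n i hi]
  constructor
  · rintro ⟨-, -, hLs⟩
    simpa using (hLgc n le_rfl).symm.trans (hLs n n.lt_succ_self)
  · intro hc
    refine ⟨?_, fun j hj => ?_, fun i hi => ?_⟩
    · simp [h0, Pi.single_eq_of_ne hn.ne]
    · simp [hsupp j (by omega), Pi.single_eq_of_ne (show j ≠ n by omega)]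
    · rcases (Nat.lt_succ_iff.mp hi).eq_or_lt with rfl | hi
      · simpa [hc] using hLgc i le_rfl
      · rw [hLgc i hi.le, if_neg hi.ne, hLg i hi, add_zero]

theorem existsUnique_isFormalSolution (hL : HasIndicialCoeffs L d) (hd₀ : d 0 = 0) (x₀ : M)
    {n : ℕ} (hn : 0 < n) (hd : ∀ i, 0 < i → i < n → d i ≠ 0) :
    ∃! g, IsFormalSolution L x₀ n g := by
  induction n, hn using Nat.le_induction with
  | base => exact ⟨Pi.single 0 x₀, (isFormalSolution_one_iff hL hd₀ x₀ _).2 rfl,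
      fun g hg => (isFormalSolution_one_iff hL hd₀ x₀ g).1 hg⟩
  | succ n hn ih =>
    obtain ⟨g, hg, hg_unique⟩ := ih fun i hi hin => hd i hi (by omega)
    have hdn : d n ≠ 0 := hd n hn n.lt_succ_self
    have hext (c : M) := hg.add_single_iff hL hn c
    refine ⟨g + Pi.single n ((d n)⁻¹ • -L g n), (hext _).2 ?_, fun h hh => ?_⟩
    · rw [smul_smul, mul_inv_cancel₀ hdn, one_smul, add_neg_cancel]
    · have htrunc : Function.update h n 0 = g := hg_unique _ (hh.update_self_zero hL hn)
      have hsplit : h = g + Pi.single n (h n) := by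
        rw [← htrunc, Pi.update_eq_sub_add_single, Pi.single_zero, add_zero, sub_add_cancel]
      have hcoeff : h n = (d n)⁻¹ • -L g n := by
        rw [eq_inv_smul_iff₀ hdn, eq_neg_iff_add_eq_zero, add_comm, ← hext, ← hsplit]
        exact hh
      rw [hsplit, hcoeff]

end

/-- Formal solution of the Dirichlet problem up to the indicial root.  We model
`R = A[[t^{1/2}]]` by coefficient sequences `ℕ → A` (index `j` standing for `t^{j/2}`),
`A` a commutative ℚ-algebra.  If the `A`-linear operator `L` satisfies the indicial
property `L(f·t^{j/2}) ≡ −(1/4)j(j−2m)·f·t^{j/2} mod t^{(j+1)/2}`, then for every `f₀`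
there exist unique `f₁, …, f_{2m−1}` with
`L(Σ_{j<2m} f_j t^{j/2}) ∈ t^m·R` (i.e. all coefficients of index `< 2m` vanish). -/
theorem stmt11 {A : Type*} [CommRing A] [Algebra ℚ A] (m : ℕ) (hm : 1 ≤ m)
    (L : (ℕ → A) →ₗ[A] (ℕ → A))
    (hL : ∀ (f : A) (j i : ℕ), i ≤ j →
      L (fun i' => if i' = j then f else 0) i
        = if i = j then ((-(1 / 4 : ℚ)) * (j : ℚ) * ((j : ℚ) - 2 * (m : ℚ))) • f else 0) :
    ∀ f₀ : A, ∃! f : ℕ → A,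
      f 0 = f₀ ∧ (∀ j, 2 * m ≤ j → f j = 0) ∧ (∀ i, i < 2 * m → L f i = 0) := by
  set d : ℕ → ℚ := fun j => -(1 / 4 : ℚ) * j * (j - 2 * m)
  have hLd : HasIndicialCoeffs L d := fun f j i hij => by
    simpa only [← Pi.single_apply] using hL f j i hij
  have hd : ∀ i, 0 < i → i < 2 * m → d i ≠ 0 := fun i hi hi' => by
    have : (i : ℚ) < 2 * m := by exact_mod_cast hi'
    simp only [d]
    exact mul_ne_zero (mul_ne_zero (by norm_num) (by positivity)) (sub_ne_zero.2 this.ne)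
  exact fun f₀ => existsUnique_isFormalSolution hLd (by simp [d]) f₀ (by omega) hd
end
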